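/- arXiv:2211.07295 — 7 statements merged into one kernel-verified Lean document; each statement's English description precedes it below -/
import Mathlib

section
/- Let E be a finite-dimensional real inner product space, K ⊆ E a nonempty closed convex set with metric projection Π_K, and h : E → ℝ a differentiable function whose gradient ∇h is L-Lipschitz and which is m-strongly convex with 0 < m ≤ L. Let μ* be the (unique) minimizer of h over K, let γ ∈ (0, 2/L), and set ε² := 1 − (2m²/L)γ + m²γ². Then for every μ ∈ K, the projected gradient update μ⁺ := Π_K(μ − γ∇h(μ)) satisfies ‖μ⁺ − μ*‖² ≤ ε² ‖μ − μ*‖². -/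
/-!
The minimizer `μs` is a fixed point of the projected gradient map (first-order optimality), and
projection onto a convex set is nonexpansive, so `‖μ⁺ - μs‖ ≤ ‖d - γ • g‖` with `d = μ - μs`,
`g = ∇h μ - ∇h μs`. Expanding the square, the Baillon–Haddad cocoercivity `‖g‖² ≤ L ⟪g, d⟫`
turns `-2γ ⟪g, d⟫ + γ² ‖g‖²` into `(γ² - 2γ/L) ‖g‖²`, whose coefficient is nonpositive for
`γ ≤ 2/L`; strong monotonicity `m ‖d‖ ≤ ‖g‖` then gives the factor `1 - 2m²γ/L + m²γ²`.
-/

open Set RealInnerProductSpace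
open scoped Gradient

section NormedSpace

variable {E : Type*} [NormedAddCommGroup E] [NormedSpace ℝ E]

theorem ConvexOn.add_fderiv_sub_le {f : E → ℝ} {f' : E →L[ℝ] ℝ} {x : E}
    (hf : ConvexOn ℝ univ f) (hx : HasFDerivAt f f' x) (y : E) : f x + f' (y - x) ≤ f y := by
  have hline : HasDerivAt (f ∘ AffineMap.lineMap (k := ℝ) x y) (f' (y - x)) 0 := by
    refine HasFDerivAt.comp_hasDerivAt (0 : ℝ) ?_ AffineMap.hasDerivAt_lineMap
    simpa using hx
  have := (hf.comp_affineMap (AffineMap.lineMap (k := ℝ) x y)).le_slope_of_hasDerivAt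
    (mem_univ 0) (mem_univ 1) zero_lt_one hline
  simpa [slope_def_field, le_sub_iff_add_le'] using this

end NormedSpace

section InnerProductSpace

variable {E : Type*} [NormedAddCommGroup E] [InnerProductSpace ℝ E] [CompleteSpace E]
  {f : E → ℝ} {m L : ℝ}

theorem ConvexOn.add_inner_gradient_sub_le (hf : ConvexOn ℝ univ f) {x : E}
    (hx : DifferentiableAt ℝ f x) (y : E) : f x + ⟪∇ f x, y - x⟫ ≤ f y := by
  simpa [inner_gradient_left] using hf.add_fderiv_sub_le hx.hasFDerivAt y

theorem StrongConvexOn.add_inner_gradient_sub_add_le (hf : StrongConvexOn univ m f) {x : E}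
    (hx : DifferentiableAt ℝ f x) (y : E) :
    f x + ⟪∇ f x, y - x⟫ + m / 2 * ‖y - x‖ ^ 2 ≤ f y := by
  have hg := (strongConvexOn_iff_convex.1 hf).add_fderiv_sub_le
    (hx.hasFDerivAt.sub ((hasFDerivAt_id x).norm_sq.const_mul (m / 2))) y
  have hnorm : ‖y‖ ^ 2 = ‖x‖ ^ 2 + 2 * ⟪x, y - x⟫ + ‖y - x‖ ^ 2 := by
    rw [← norm_add_sq_real, add_sub_cancel]
  simp only [sub_apply, smul_apply, ContinuousLinearMap.comp_apply, innerSL_apply_apply,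
    ContinuousLinearMap.coe_id', id, hnorm, inner_gradient_left, nsmul_eq_mul, smul_eq_mul]
    at hg ⊢
  linarith

theorem StrongConvexOn.mul_sq_norm_sub_le_inner_gradient_sub (hf : StrongConvexOn univ m f)
    (hdiff : Differentiable ℝ f) (x y : E) :
    m * ‖y - x‖ ^ 2 ≤ ⟪∇ f y - ∇ f x, y - x⟫ := by
  have hxy := hf.add_inner_gradient_sub_add_le (hdiff x) y
  have hyx := hf.add_inner_gradient_sub_add_le (hdiff y) x
  rw [← neg_sub y x, inner_neg_right, norm_neg] at hyx
  rw [inner_sub_left]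
  linarith

theorem DifferentiableAt.hasDerivAt_add_smul {x d : E} {t : ℝ}
    (hf : DifferentiableAt ℝ f (x + t • d)) :
    HasDerivAt (fun s : ℝ => f (x + s • d)) ⟪∇ f (x + t • d), d⟫ t := by
  have hline : HasDerivAt (fun s : ℝ => x + s • d) d t := by
    simpa using ((hasDerivAt_id t).smul_const d).const_add x
  have := hf.hasFDerivAt.comp_hasDerivAt t hline
  rwa [← inner_gradient_left] at this

theorem le_add_inner_gradient_add_of_lipschitz_gradient (hdiff : Differentiable ℝ f)
    (hLip : ∀ x y, ‖∇ f x - ∇ f y‖ ≤ L * ‖x - y‖) (x d : E) :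
    f (x + d) ≤ f x + ⟪∇ f x, d⟫ + L / 2 * ‖d‖ ^ 2 := by
  let ψ : ℝ → ℝ := fun t => f (x + t • d) - t * ⟪∇ f x, d⟫ - L / 2 * t ^ 2 * ‖d‖ ^ 2
  have hψ (t : ℝ) : HasDerivAt ψ (⟪∇ f (x + t • d) - ∇ f x, d⟫ - L * t * ‖d‖ ^ 2) t := by
    have hline := (hdiff (x + t • d)).hasDerivAt_add_smul
    have hlin := (hasDerivAt_id t).mul_const ⟪∇ f x, d⟫
    have hquad := ((hasDerivAt_pow 2 t).const_mul (L / 2)).mul_const (‖d‖ ^ 2)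
    refine ((hline.sub hlin).sub hquad).congr_deriv ?_
    rw [inner_sub_left]
    ring
  have hψ' : ∀ t ∈ interior (Ici (0 : ℝ)),
      ⟪∇ f (x + t • d) - ∇ f x, d⟫ - L * t * ‖d‖ ^ 2 ≤ 0 := by
    intro t ht
    rw [interior_Ici, mem_Ioi] at ht
    have hgrad : ‖∇ f (x + t • d) - ∇ f x‖ ≤ L * (t * ‖d‖) := by
      simpa [norm_smul, abs_of_pos ht] using hLip (x + t • d) x
    nlinarith [real_inner_le_norm (∇ f (x + t • d) - ∇ f x) d, norm_nonneg d]
  have hanti : AntitoneOn ψ (Ici 0) :=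
    antitoneOn_of_hasDerivWithinAt_nonpos (convex_Ici 0)
      (fun t _ => (hψ t).continuousAt.continuousWithinAt)
      (fun t _ => (hψ t).hasDerivWithinAt) hψ'
  have := hanti self_mem_Ici (mem_Ici.2 zero_le_one) zero_le_one
  simp only [ψ, zero_smul, one_smul, add_zero, zero_mul, one_mul, one_pow, sub_zero,
    mul_one, ne_eq, OfNat.ofNat_ne_zero, not_false_eq_true, zero_pow, mul_zero] at this
  linarith

theorem ConvexOn.add_inner_gradient_sub_add_sq_norm_div_le (hf : ConvexOn ℝ univ f)
    (hdiff : Differentiable ℝ f) (hL : 0 < L) (hLip : ∀ x y, ‖∇ f x - ∇ f y‖ ≤ L * ‖x - y‖)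
    (x y : E) :
    f x + ⟪∇ f x, y - x⟫ + ‖∇ f y - ∇ f x‖ ^ 2 / (2 * L) ≤ f y := by
  set g := ∇ f y - ∇ f x
  have hlower := hf.add_inner_gradient_sub_le (hdiff x) (y + (-L⁻¹) • g)
  have hupper := le_add_inner_gradient_add_of_lipschitz_gradient hdiff hLip y ((-L⁻¹) • g)
  have hg : ⟪∇ f y, g⟫ - ⟪∇ f x, g⟫ = ‖g‖ ^ 2 := by
    rw [← inner_sub_left, real_inner_self_eq_norm_sq]
  rw [add_sub_right_comm, inner_add_right, inner_smul_right] at hlower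
  rw [inner_smul_right, norm_smul, mul_pow, Real.norm_eq_abs, sq_abs] at hupper
  have hsq : L / 2 * ((-L⁻¹) ^ 2 * ‖g‖ ^ 2) = ‖g‖ ^ 2 / (2 * L) := by
    field_simp
  have hlin : -L⁻¹ * ⟪∇ f y, g⟫ - -L⁻¹ * ⟪∇ f x, g⟫ = - (‖g‖ ^ 2 / L) := by
    rw [← mul_sub, hg]; ring
  have hhalf : ‖g‖ ^ 2 / L = 2 * (‖g‖ ^ 2 / (2 * L)) := by field_simp
  linarith

theorem ConvexOn.sq_norm_gradient_sub_le_mul_inner (hf : ConvexOn ℝ univ f)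
    (hdiff : Differentiable ℝ f) (hL : 0 < L) (hLip : ∀ x y, ‖∇ f x - ∇ f y‖ ≤ L * ‖x - y‖)
    (x y : E) :
    ‖∇ f y - ∇ f x‖ ^ 2 ≤ L * ⟪∇ f y - ∇ f x, y - x⟫ := by
  have hxy := hf.add_inner_gradient_sub_add_sq_norm_div_le hdiff hL hLip x y
  have hyx := hf.add_inner_gradient_sub_add_sq_norm_div_le hdiff hL hLip y x
  rw [← neg_sub y x, inner_neg_right, norm_sub_rev] at hyx
  have hsum : ‖∇ f y - ∇ f x‖ ^ 2 / L ≤ ⟪∇ f y - ∇ f x, y - x⟫ := by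
    rw [inner_sub_left]
    have hhalf : ‖∇ f y - ∇ f x‖ ^ 2 / L = 2 * (‖∇ f y - ∇ f x‖ ^ 2 / (2 * L)) := by
      field_simp
    linarith
  rwa [div_le_iff₀' hL] at hsum

theorem IsMinOn.inner_gradient_sub_nonneg {K : Set E} (hK : Convex ℝ K) {a z : E}
    (hmin : IsMinOn f K a) (ha : a ∈ K) (hz : z ∈ K) (hf : DifferentiableAt ℝ f a) :
    0 ≤ ⟪∇ f a, z - a⟫ := by
  rw [inner_gradient_left]
  exact hmin.localize.hasFDerivWithinAt_nonneg hf.hasFDerivAt.hasFDerivWithinAt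
    (sub_mem_posTangentConeAt_of_segment_subset (hK.segment_subset ha hz))

end InnerProductSpace

section Projection

variable {E : Type*} [NormedAddCommGroup E] [InnerProductSpace ℝ E]

theorem Convex.inner_sub_le_zero_of_forall_norm_sub_le {K : Set E} (hK : Convex ℝ K)
    {y p : E} (hp : p ∈ K) (hnearest : ∀ z ∈ K, ‖y - p‖ ≤ ‖y - z‖) {w : E} (hw : w ∈ K) :
    ⟪y - p, w - p⟫ ≤ 0 := by
  have : Nonempty K := ⟨⟨p, hp⟩⟩
  refine (norm_eq_iInf_iff_real_inner_le_zero hK hp).1 (le_antisymm ?_ ?_) w hw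
  · exact le_ciInf fun z : K => hnearest z z.2
  · exact ciInf_le (f := fun z : K => ‖y - z‖) ⟨0, by rintro _ ⟨z, rfl⟩; exact norm_nonneg _⟩
      ⟨p, hp⟩

theorem norm_sub_le_of_inner_sub_nonpos {x y p q : E} (hp : ⟪y - p, q - p⟫ ≤ 0)
    (hq : ⟪x - q, p - q⟫ ≤ 0) : ‖p - q‖ ≤ ‖y - x‖ := by
  have hsplit : ‖p - q‖ ^ 2 = ⟪y - x, p - q⟫ + ⟪y - p, q - p⟫ + ⟪x - q, p - q⟫ := by
    rw [← real_inner_self_eq_norm_sq, ← neg_sub p q, inner_neg_right, ← sub_eq_add_neg,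
      ← inner_sub_left, ← inner_add_left]
    congr 1
    abel
  have hcs := real_inner_le_norm (y - x) (p - q)
  nlinarith [norm_nonneg (p - q), norm_nonneg (y - x)]

end Projection

theorem sq_norm_sub_smul_le {E : Type*} [NormedAddCommGroup E] [InnerProductSpace ℝ E]
    {g d : E} {m L γ : ℝ} (hm : 0 ≤ m) (hγ : 0 < γ) (hγL : γ ≤ 2 / L)
    (hmono : m * ‖d‖ ^ 2 ≤ ⟪g, d⟫) (hcoco : ‖g‖ ^ 2 ≤ L * ⟪g, d⟫) :
    ‖d - γ • g‖ ^ 2 ≤ (1 - 2 * m ^ 2 / L * γ + m ^ 2 * γ ^ 2) * ‖d‖ ^ 2 := by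
  have hL : 0 < L := (div_pos_iff_of_pos_left two_pos).1 (hγ.trans_le hγL)
  have hgd : m * ‖d‖ ≤ ‖g‖ := by
    rcases (norm_nonneg d).eq_or_lt with hd | hd
    · rw [← hd, mul_zero]; exact norm_nonneg g
    · nlinarith [real_inner_le_norm g d]
  have hgd_sq : m ^ 2 * ‖d‖ ^ 2 ≤ ‖g‖ ^ 2 := by
    rw [← mul_pow]; exact pow_le_pow_left₀ (by positivity) hgd 2
  have hexpand : ‖d - γ • g‖ ^ 2 = ‖d‖ ^ 2 - 2 * γ * ⟪g, d⟫ + γ ^ 2 * ‖g‖ ^ 2 := by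
    rw [norm_sub_sq_real, inner_smul_right, norm_smul, mul_pow, Real.norm_eq_abs, sq_abs,
      real_inner_comm]
    ring
  have hcoco' : 2 * γ / L * ‖g‖ ^ 2 ≤ 2 * γ * ⟪g, d⟫ := by
    rw [div_mul_eq_mul_div, div_le_iff₀ hL]; nlinarith
  have hstep : γ ^ 2 - 2 * γ / L ≤ 0 := by
    rw [show γ ^ 2 - 2 * γ / L = γ * (γ - 2 / L) by ring]
    exact mul_nonpos_of_nonneg_of_nonpos hγ.le (sub_nonpos.2 hγL)
  calc ‖d - γ • g‖ ^ 2 ≤ ‖d‖ ^ 2 + (γ ^ 2 - 2 * γ / L) * ‖g‖ ^ 2 := by rw [hexpand]; linarith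
    _ ≤ ‖d‖ ^ 2 + (γ ^ 2 - 2 * γ / L) * (m ^ 2 * ‖d‖ ^ 2) := by
        linarith [mul_le_mul_of_nonpos_left hgd_sq hstep]
    _ = (1 - 2 * m ^ 2 / L * γ + m ^ 2 * γ ^ 2) * ‖d‖ ^ 2 := by ring

theorem stmt0_general
    {E : Type*} [NormedAddCommGroup E] [InnerProductSpace ℝ E] [FiniteDimensional ℝ E]
    (K : Set E) (hKcv : Convex ℝ K)
    (proj : E → E)
    (hproj : ∀ y : E, proj y ∈ K ∧ ∀ z ∈ K, ‖y - proj y‖ ≤ ‖y - z‖)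
    (h : E → ℝ) (hdiff : Differentiable ℝ h)
    (L m : ℝ) (hm : 0 < m)
    (hLip : ∀ x y : E, ‖gradient h x - gradient h y‖ ≤ L * ‖x - y‖)
    (hsc : ConvexOn ℝ Set.univ (fun x : E => h x - m / 2 * ‖x‖ ^ 2))
    (μs : E) (hμsK : μs ∈ K) (hμsmin : ∀ z ∈ K, h μs ≤ h z)
    (γ : ℝ) (hγ : 0 < γ) (hγL : γ < 2 / L)
    (μ : E) :
    ‖proj (μ - γ • gradient h μ) - μs‖ ^ 2 ≤
      (1 - 2 * m ^ 2 / L * γ + m ^ 2 * γ ^ 2) * ‖μ - μs‖ ^ 2 := by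
  have hL : 0 < L := (div_pos_iff_of_pos_left two_pos).1 (hγ.trans hγL)
  have hstrong : StrongConvexOn univ m h := strongConvexOn_iff_convex.2 hsc
  have hconv : ConvexOn ℝ univ h := strongConvexOn_zero.1 (hstrong.mono hm.le)
  set p := proj (μ - γ • ∇ h μ)
  have hp_nearest : ⟪(μ - γ • ∇ h μ) - p, μs - p⟫ ≤ 0 :=
    hKcv.inner_sub_le_zero_of_forall_norm_sub_le (hproj _).1 (hproj _).2 hμsK
  have hμs_nearest : ⟪(μs - γ • ∇ h μs) - μs, p - μs⟫ ≤ 0 := by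
    rw [sub_sub_cancel_left, inner_neg_left, inner_smul_left, neg_nonpos]
    exact mul_nonneg hγ.le (isMinOn_iff.2 hμsmin |>.inner_gradient_sub_nonneg hKcv hμsK
      (hproj _).1 (hdiff μs))
  have hnonexp := norm_sub_le_of_inner_sub_nonpos hp_nearest hμs_nearest
  rw [show μ - γ • ∇ h μ - (μs - γ • ∇ h μs) = (μ - μs) - γ • (∇ h μ - ∇ h μs) by module]
    at hnonexp
  calc ‖p - μs‖ ^ 2 ≤ ‖(μ - μs) - γ • (∇ h μ - ∇ h μs)‖ ^ 2 := by gcongr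
    _ ≤ _ := sq_norm_sub_smul_le hm.le hγ hγL.le
        (hstrong.mul_sq_norm_sub_le_inner_gradient_sub hdiff μs μ)
        (hconv.sq_norm_gradient_sub_le_mul_inner hdiff hL hLip μs μ)

/-- **Projected gradient contraction (Theorem 4(i)).**
Let `E` be a finite-dimensional real inner product space, `K ⊆ E` a nonempty closed
convex set with metric projection `proj`, and `h : E → ℝ` differentiable with
`L`-Lipschitz gradient and `m`-strongly convex (`0 < m ≤ L`).  If `μs` minimizes `h`
over `K` and `γ ∈ (0, 2/L)`, then with `ε² = 1 - (2m²/L)γ + m²γ²`, for every `μ ∈ K`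
the update `μ⁺ = proj (μ - γ∇h(μ))` satisfies `‖μ⁺ - μs‖² ≤ ε² ‖μ - μs‖²`. -/
theorem stmt0
    {E : Type*} [NormedAddCommGroup E] [InnerProductSpace ℝ E] [FiniteDimensional ℝ E]
    (K : Set E) (hKne : K.Nonempty) (hKcl : IsClosed K) (hKcv : Convex ℝ K)
    (proj : E → E)
    (hproj : ∀ y : E, proj y ∈ K ∧ ∀ z ∈ K, ‖y - proj y‖ ≤ ‖y - z‖)
    (h : E → ℝ) (hdiff : Differentiable ℝ h)
    (L m : ℝ) (hm : 0 < m) (hmL : m ≤ L)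
    (hLip : ∀ x y : E, ‖gradient h x - gradient h y‖ ≤ L * ‖x - y‖)
    (hsc : ConvexOn ℝ Set.univ (fun x : E => h x - m / 2 * ‖x‖ ^ 2))
    (μs : E) (hμsK : μs ∈ K) (hμsmin : ∀ z ∈ K, h μs ≤ h z)
    (hμsuniq : ∀ z ∈ K, (∀ w ∈ K, h z ≤ h w) → z = μs)
    (γ : ℝ) (hγ : 0 < γ) (hγL : γ < 2 / L)
    (μ : E) (hμK : μ ∈ K) :
    ‖proj (μ - γ • gradient h μ) - μs‖ ^ 2 ≤
      (1 - 2 * m ^ 2 / L * γ + m ^ 2 * γ ^ 2) * ‖μ - μs‖ ^ 2 :=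
  stmt0_general K hKcv proj hproj h hdiff L m hm hLip hsc μs hμsK hμsmin γ hγ hγL μ
end

section
/- Consider the finite-horizon optimal control setup with dynamics f, stage cost l, terminal cost V_f, input constraint set 𝒰 and horizon N, with predicted states ξ_k(x,μ) and running cost h(x,μ) as defined below. Suppose κ is a terminal controller on a set X_f ⊆ ℝ^{n_x}, i.e., for all z ∈ X_f: κ(z) ∈ 𝒰, f(z,κ(z)) ∈ X_f, and V_f(f(z,κ(z))) ≤ V_f(z) − l(z,κ(z)). Then for every x ∈ ℝ^{n_x} and every μ = (μ_0,…,μ_{N−1}) ∈ 𝒰^N with ξ_N(x,μ) ∈ X_f, the shifted sequence μ⁺ := (μ_1, …, μ_{N−1}, κ(ξ_N(x,μ))) belongs to 𝒰^N and satisfies h(f(x,μ_0), μ⁺) ≤ h(x,μ) − l(x,μ_0). -/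
/-- Predicted states: `xi f x μ 0 = x` and `xi f x μ (k+1) = f (xi f x μ k) (μ k)`
for `k < N` (constant afterwards). -/
def xi {X U : Type*} {N : ℕ} (f : X → U → X) (x : X) (μ : Fin N → U) : ℕ → X
  | 0 => x
  | k + 1 => if h : k < N then f (xi f x μ k) (μ ⟨k, h⟩) else xi f x μ k

/-- Running cost `h(x,μ) = ∑_{k=0}^{N-1} l(ξ_k(x,μ), μ_k) + V_f(ξ_N(x,μ))`. -/
def cost {X U : Type*} {N : ℕ} (f : X → U → X) (l : X → U → ℝ) (Vf : X → ℝ)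
    (x : X) (μ : Fin N → U) : ℝ :=
  (∑ k : Fin N, l (xi f x μ k.val) (μ k)) + Vf (xi f x μ N)

/-- **Warm-start cost decrease.**  If `κ` is a terminal controller on `Xf` and
`μ ∈ 𝒰^N` is a sequence with `ξ_N(x,μ) ∈ Xf`, then the shifted sequence
`μ⁺ = (μ_1, …, μ_{N-1}, κ(ξ_N(x,μ)))` lies in `𝒰^N` and satisfies
`h(f(x,μ_0), μ⁺) ≤ h(x,μ) - l(x,μ_0)`. -/
theorem stmt4 {nx nu N : ℕ} (hN : 0 < N)
    (f : (Fin nx → ℝ) → (Fin nu → ℝ) → (Fin nx → ℝ))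
    (l : (Fin nx → ℝ) → (Fin nu → ℝ) → ℝ) (Vf : (Fin nx → ℝ) → ℝ)
    (Uset : Set (Fin nu → ℝ)) (hUne : Uset.Nonempty) (hUcl : IsClosed Uset)
    (hUcv : Convex ℝ Uset)
    (Xf : Set (Fin nx → ℝ)) (κ : (Fin nx → ℝ) → (Fin nu → ℝ))
    (hκ : ∀ z ∈ Xf, κ z ∈ Uset ∧ f z (κ z) ∈ Xf ∧
      Vf (f z (κ z)) ≤ Vf z - l z (κ z))
    (x : Fin nx → ℝ) (μ : Fin N → (Fin nu → ℝ)) (hμU : ∀ k, μ k ∈ Uset)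
    (hterm : xi f x μ N ∈ Xf) :
    (∀ k : Fin N,
      (fun k : Fin N => if hk : (k : ℕ) + 1 < N then μ ⟨(k : ℕ) + 1, hk⟩
        else κ (xi f x μ N)) k ∈ Uset) ∧
    cost f l Vf (f x (μ ⟨0, hN⟩))
        (fun k : Fin N => if hk : (k : ℕ) + 1 < N then μ ⟨(k : ℕ) + 1, hk⟩
          else κ (xi f x μ N)) ≤
      cost f l Vf x μ - l x (μ ⟨0, hN⟩) := by
  obtain ⟨m, rfl⟩ : ∃ m, N = m + 1 := ⟨N - 1, (Nat.succ_pred_eq_of_pos hN).symm⟩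
  set ν : Fin (m + 1) → (Fin nu → ℝ) := fun k : Fin (m + 1) =>
    if hk : (k : ℕ) + 1 < m + 1 then μ ⟨(k : ℕ) + 1, hk⟩ else κ (xi f x μ (m + 1)) with hν
  obtain ⟨hκU, hκf, hκV⟩ := hκ _ hterm
  have hmem : ∀ k : Fin (m + 1), ν k ∈ Uset := by
    intro k
    simp only [hν]
    split
    · exact hμU _
    · exact hκU
  refine ⟨hmem, ?_⟩
  set x' := f x (μ ⟨0, hN⟩) with hx'
  have hshift : ∀ k, k ≤ m → xi f x' ν k = xi f x μ (k + 1) := by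
    intro k hk
    induction k with
    | zero => simp [xi, hx']
    | succ k ih =>
      have hk' : k ≤ m := Nat.le_of_succ_le hk
      have h1 : k < m + 1 := Nat.lt_succ_of_le hk'
      have h2 : k + 1 < m + 1 := Nat.succ_lt_succ (Nat.lt_of_succ_le hk)
      rw [show xi f x' ν (k + 1)
          = if h : k < m + 1 then f (xi f x' ν k) (ν ⟨k, h⟩) else xi f x' ν k from rfl]
      rw [dif_pos h1, ih hk']
      have hνk : ν ⟨k, h1⟩ = μ ⟨k + 1, h2⟩ := by
        simp only [hν]
        exact dif_pos h2
      rw [hνk]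
      rw [show xi f x μ (k + 2)
          = if h : k + 1 < m + 1 then f (xi f x μ (k + 1)) (μ ⟨k + 1, h⟩)
            else xi f x μ (k + 1) from rfl, dif_pos h2]
  have hνlast : ν ⟨m, Nat.lt_succ_self m⟩ = κ (xi f x μ (m + 1)) := by
    simp only [hν]
    exact dif_neg (Nat.lt_irrefl _)
  have hlast : xi f x' ν (m + 1) = f (xi f x μ (m + 1)) (κ (xi f x μ (m + 1))) := by
    rw [show xi f x' ν (m + 1)
        = if h : m < m + 1 then f (xi f x' ν m) (ν ⟨m, h⟩) else xi f x' ν m from rfl,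
      dif_pos (Nat.lt_succ_self m), hshift m le_rfl, hνlast]
  have hL : (∑ k : Fin (m + 1), l (xi f x' ν k.val) (ν k))
      = (∑ k : Fin m, l (xi f x μ ((k : ℕ) + 1)) (μ k.succ))
        + l (xi f x μ (m + 1)) (κ (xi f x μ (m + 1))) := by
    rw [Fin.sum_univ_castSucc]
    congr 1
    · refine Finset.sum_congr rfl fun k _ => ?_
      have hk : (k : ℕ) < m := k.isLt
      have h2 : (k : ℕ) + 1 < m + 1 := Nat.succ_lt_succ hk
      have hc : ((k.castSucc : Fin (m + 1)) : ℕ) = (k : ℕ) := rfl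
      rw [hc, hshift k (Nat.le_of_lt hk)]
      congr 1
      show (if hk : (k : ℕ) + 1 < m + 1 then μ ⟨(k : ℕ) + 1, hk⟩
        else κ (xi f x μ (m + 1))) = μ k.succ
      rw [dif_pos h2]
      rfl
    · simp only [Fin.val_last]
      rw [hshift m le_rfl]
      exact congrArg _ hνlast
  have hR : (∑ k : Fin (m + 1), l (xi f x μ k.val) (μ k))
      = l x (μ ⟨0, hN⟩) + ∑ k : Fin m, l (xi f x μ ((k : ℕ) + 1)) (μ k.succ) := by
    rw [Fin.sum_univ_succ]
    rfl
  unfold cost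
  rw [hlast, hL, hR]
  linarith
end

section
/- Consider the finite-horizon optimal control setup with dynamics f, stage cost l, terminal cost V_f, input constraint set 𝒰, horizon N, predicted states ξ_k(x,μ), running cost h(x,μ), and value function V(x) = inf_{μ ∈ 𝒰^N} h(x,μ) as defined below. Suppose κ is a terminal controller on a set X_f ⊆ ℝ^{n_x}, i.e., for all z ∈ X_f: κ(z) ∈ 𝒰, f(z,κ(z)) ∈ X_f, and V_f(f(z,κ(z))) ≤ V_f(z) − l(z,κ(z)). Suppose also that h is bounded below on {x} × 𝒰^N and on {f(x,μ*_0(x))} × 𝒰^N, and that the infimum defining V(x) is attained at μ*(x) ∈ 𝒰^N with ξ_N(x, μ*(x)) ∈ X_f. Then, with u*(x) := μ*_0(x) the first element of the optimal sequence, V(f(x, u*(x))) ≤ V(x) − l(x, u*(x)). -/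
/-- **NMPC value-function decrease (Theorem 1, inequality (4)).**
With `V(z) = inf_{μ ∈ 𝒰^N} h(z,μ)` (as the greatest lower bound), a terminal
controller `κ` on `Xf`, boundedness below of the relevant cost sets, and the
infimum at `x` attained at `μs ∈ 𝒰^N` with `ξ_N(x,μs) ∈ Xf`, it holds that
`V(f(x,u*(x))) ≤ V(x) - l(x,u*(x))` where `u*(x) = μs_0`. -/
theorem stmt5 {nx nu N : ℕ} (hN : 0 < N)
    (f : (Fin nx → ℝ) → (Fin nu → ℝ) → (Fin nx → ℝ))
    (l : (Fin nx → ℝ) → (Fin nu → ℝ) → ℝ) (Vf : (Fin nx → ℝ) → ℝ)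
    (Uset : Set (Fin nu → ℝ)) (hUne : Uset.Nonempty) (hUcl : IsClosed Uset)
    (hUcv : Convex ℝ Uset)
    (Xf : Set (Fin nx → ℝ)) (κ : (Fin nx → ℝ) → (Fin nu → ℝ))
    (hκ : ∀ z ∈ Xf, κ z ∈ Uset ∧ f z (κ z) ∈ Xf ∧
      Vf (f z (κ z)) ≤ Vf z - l z (κ z))
    (V : (Fin nx → ℝ) → ℝ)
    (hV : ∀ z : Fin nx → ℝ,
      IsGLB {r : ℝ | ∃ μ : Fin N → (Fin nu → ℝ),
        (∀ k, μ k ∈ Uset) ∧ cost f l Vf z μ = r} (V z))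
    (x : Fin nx → ℝ) (μs : Fin N → (Fin nu → ℝ)) (hμsU : ∀ k, μs k ∈ Uset)
    (hatt : cost f l Vf x μs = V x)
    (hterm : xi f x μs N ∈ Xf)
    (hbdd1 : BddBelow {r : ℝ | ∃ μ : Fin N → (Fin nu → ℝ),
      (∀ k, μ k ∈ Uset) ∧ cost f l Vf x μ = r})
    (hbdd2 : BddBelow {r : ℝ | ∃ μ : Fin N → (Fin nu → ℝ),
      (∀ k, μ k ∈ Uset) ∧ cost f l Vf (f x (μs ⟨0, hN⟩)) μ = r}) :
    V (f x (μs ⟨0, hN⟩)) ≤ V x - l x (μs ⟨0, hN⟩) := by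
  obtain ⟨m, rfl⟩ : ∃ m, N = m + 1 := ⟨N - 1, by omega⟩
  set x' := f x (μs ⟨0, hN⟩) with hx'
  set z := xi f x μs (m + 1) with hz
  obtain ⟨hκU, hκf, hκV⟩ := hκ z hterm
  set μ' : Fin (m + 1) → (Fin nu → ℝ) :=
    fun k => if h : k.val + 1 < m + 1 then μs ⟨k.val + 1, h⟩ else κ z with hμ'
  have hμ'U : ∀ k, μ' k ∈ Uset := by
    intro k
    dsimp only [μ']
    split
    · exact hμsU _
    · exact hκU
  have hμc : ∀ k : Fin m, μ' k.castSucc = μs k.succ := by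
    intro k
    dsimp only [μ']
    exact (dif_pos (Nat.succ_lt_succ k.isLt)).trans rfl
  have hμlast : μ' (Fin.last m) = κ z := by
    dsimp only [μ']
    exact dif_neg (by simp)
  have hA : ∀ k, k < m + 1 → xi f x' μ' k = xi f x μs (k + 1) := by
    intro k hk
    induction k with
    | zero =>
      show x' = xi f x μs 1
      simp [xi, hN, hx']
    | succ k ih =>
      have hk' : k < m + 1 := by omega
      have h1 : xi f x' μ' (k + 1) = f (xi f x' μ' k) (μ' ⟨k, hk'⟩) := by
        simp [xi, hk']
      have h2 : xi f x μs (k + 2) = f (xi f x μs (k + 1)) (μs ⟨k + 1, hk⟩) := by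
        simp [xi, hk]
      rw [h1, h2, ih hk']
      have hμk : μ' ⟨k, hk'⟩ = μs ⟨k + 1, hk⟩ := by
        dsimp only [μ']
        exact (dif_pos hk).trans rfl
      rw [hμk]
  have hend : xi f x' μ' (m + 1) = f z (κ z) := by
    have h1 : xi f x' μ' (m + 1) = f (xi f x' μ' m) (μ' ⟨m, lt_add_one m⟩) := by
      simp [xi]
    have hμm : μ' ⟨m, lt_add_one m⟩ = κ z := by
      dsimp only [μ']
      exact dif_neg (by simp)
    rw [h1, hA m (lt_add_one m), ← hz, hμm]
  have hcost1 : cost f l Vf x' μ' =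
      (∑ k : Fin m, l (xi f x μs (k.val + 1)) (μs k.succ)) + l z (κ z)
        + Vf (f z (κ z)) := by
    unfold cost
    rw [Fin.sum_univ_castSucc, hend]
    simp only [Fin.coe_castSucc, Fin.val_last, hμlast]
    rw [hA m (lt_add_one m), ← hz]
    congr 2
    apply Finset.sum_congr rfl
    intro k _
    rw [hμc k, hA k.val (by omega)]
  have hcost2 : cost f l Vf x μs =
      l x (μs ⟨0, hN⟩) + (∑ k : Fin m, l (xi f x μs (k.val + 1)) (μs k.succ))
        + Vf z := by
    unfold cost
    rw [Fin.sum_univ_succ, ← hz]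
    have h0 : (0 : Fin (m + 1)) = ⟨0, hN⟩ := by ext; simp
    rw [h0]
    rfl
  have hmem : V x' ≤ cost f l Vf x' μ' := (hV x').1 ⟨μ', hμ'U, rfl⟩
  have hatt' := hatt
  rw [hcost2] at hatt'
  rw [hcost1] at hmem
  linarith
end

section
/- Consider the finite-horizon optimal control setup with dynamics f, stage cost l, terminal cost V_f, input constraint set 𝒰, horizon N, predicted states ξ_k(x,μ), running cost h(x,μ), and value function V(x) = inf_{μ ∈ 𝒰^N} h(x,μ) as defined below. Suppose κ is a terminal controller on a set X_f ⊆ ℝ^{n_x}, i.e., for all z ∈ X_f: κ(z) ∈ 𝒰, f(z,κ(z)) ∈ X_f, and V_f(f(z,κ(z))) ≤ V_f(z) − l(z,κ(z)). Then for every x ∈ X_f, V(x) ≤ V_f(x). -/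
/-!
Feed the terminal controller its own closed-loop trajectory `z₀ = x, z_{k+1} = f z_k (κ z_k)`
as an open-loop input sequence. The trajectory stays in `X_f`, so every input is admissible,
and the decrease condition `V_f(z_{k+1}) + l(z_k, κ z_k) ≤ V_f(z_k)` telescopes to
`h(x, μ) ≤ V_f(x)`; the infimum `V(x)` is below this particular cost.
-/

section ClosedLoop

variable {X U : Type*} (f : X → U → X) (κ : X → U)

def closedLoopTraj (x : X) : ℕ → X
  | 0 => x
  | k + 1 => f (closedLoopTraj x k) (κ (closedLoopTraj x k))

def closedLoopInputs (N : ℕ) (x : X) : Fin N → U :=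
  fun k => κ (closedLoopTraj f κ x k)

variable {f κ}

theorem closedLoopTraj_mem {Xf : Set X} (hinv : ∀ z ∈ Xf, f z (κ z) ∈ Xf)
    {x : X} (hx : x ∈ Xf) (k : ℕ) : closedLoopTraj f κ x k ∈ Xf := by
  induction k with
  | zero => exact hx
  | succ k ih => exact hinv _ ih

theorem xi_closedLoopInputs {N : ℕ} (x : X) {k : ℕ} (hk : k ≤ N) :
    xi f x (closedLoopInputs f κ N x) k = closedLoopTraj f κ x k := by
  induction k with
  | zero => rfl
  | succ k ih =>
    have hkN : k < N := hk
    simp only [xi, dif_pos hkN, ih hkN.le, closedLoopInputs, closedLoopTraj]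

theorem sum_stageCost_add_terminalCost_le {l : X → U → ℝ} {Vf : X → ℝ} {Xf : Set X}
    (hinv : ∀ z ∈ Xf, f z (κ z) ∈ Xf)
    (hdec : ∀ z ∈ Xf, Vf (f z (κ z)) ≤ Vf z - l z (κ z)) {x : X} (hx : x ∈ Xf) (m : ℕ) :
    (∑ k ∈ Finset.range m, l (closedLoopTraj f κ x k) (κ (closedLoopTraj f κ x k)))
      + Vf (closedLoopTraj f κ x m) ≤ Vf x := by
  induction m with
  | zero => simp [closedLoopTraj]
  | succ m ih =>
    have := hdec _ (closedLoopTraj_mem hinv hx m)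
    rw [Finset.sum_range_succ]
    simp only [closedLoopTraj] at this ⊢
    linarith

theorem cost_closedLoopInputs_le {N : ℕ} {l : X → U → ℝ} {Vf : X → ℝ} {Xf : Set X}
    (hinv : ∀ z ∈ Xf, f z (κ z) ∈ Xf)
    (hdec : ∀ z ∈ Xf, Vf (f z (κ z)) ≤ Vf z - l z (κ z)) {x : X} (hx : x ∈ Xf) :
    cost f l Vf x (closedLoopInputs f κ N x) ≤ Vf x := by
  have hsum : (∑ k : Fin N, l (xi f x (closedLoopInputs f κ N x) k) (closedLoopInputs f κ N x k))
      = ∑ k ∈ Finset.range N, l (closedLoopTraj f κ x k) (κ (closedLoopTraj f κ x k)) := by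
    rw [Finset.sum_range fun k => l (closedLoopTraj f κ x k) (κ (closedLoopTraj f κ x k))]
    exact Finset.sum_congr rfl fun k _ => by rw [xi_closedLoopInputs x k.isLt.le]; rfl
  rw [cost, hsum, xi_closedLoopInputs x le_rfl]
  exact sum_stageCost_add_terminalCost_le hinv hdec hx N

end ClosedLoop

theorem stmt6_general {nx nu N : ℕ}
    (f : (Fin nx → ℝ) → (Fin nu → ℝ) → (Fin nx → ℝ))
    (l : (Fin nx → ℝ) → (Fin nu → ℝ) → ℝ) (Vf : (Fin nx → ℝ) → ℝ)
    (Uset : Set (Fin nu → ℝ))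
    (Xf : Set (Fin nx → ℝ)) (κ : (Fin nx → ℝ) → (Fin nu → ℝ))
    (hκ : ∀ z ∈ Xf, κ z ∈ Uset ∧ f z (κ z) ∈ Xf ∧
      Vf (f z (κ z)) ≤ Vf z - l z (κ z))
    (V : (Fin nx → ℝ) → ℝ)
    (hV : ∀ z : Fin nx → ℝ,
      IsGLB {r : ℝ | ∃ μ : Fin N → (Fin nu → ℝ),
        (∀ k, μ k ∈ Uset) ∧ cost f l Vf z μ = r} (V z))
    (x : Fin nx → ℝ) (hx : x ∈ Xf) :
    V x ≤ Vf x := by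
  have hinv : ∀ z ∈ Xf, f z (κ z) ∈ Xf := fun z hz => (hκ z hz).2.1
  have hadm : ∀ k, closedLoopInputs f κ N x k ∈ Uset :=
    fun k => (hκ _ (closedLoopTraj_mem hinv hx k)).1
  calc V x ≤ cost f l Vf x (closedLoopInputs f κ N x) := (hV x).1 ⟨_, hadm, rfl⟩
    _ ≤ Vf x := cost_closedLoopInputs_le hinv (fun z hz => (hκ z hz).2.2) hx

/-- **Terminal cost bounds value function on the terminal set.**
With `V(z) = inf_{μ ∈ 𝒰^N} h(z,μ)` (as the greatest lower bound) and a terminal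
controller `κ` on `Xf`, for every `x ∈ Xf` one has `V(x) ≤ V_f(x)`. -/
theorem stmt6 {nx nu N : ℕ} (hN : 0 < N)
    (f : (Fin nx → ℝ) → (Fin nu → ℝ) → (Fin nx → ℝ))
    (l : (Fin nx → ℝ) → (Fin nu → ℝ) → ℝ) (Vf : (Fin nx → ℝ) → ℝ)
    (Uset : Set (Fin nu → ℝ)) (hUne : Uset.Nonempty) (hUcl : IsClosed Uset)
    (hUcv : Convex ℝ Uset)
    (Xf : Set (Fin nx → ℝ)) (κ : (Fin nx → ℝ) → (Fin nu → ℝ))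
    (hκ : ∀ z ∈ Xf, κ z ∈ Uset ∧ f z (κ z) ∈ Xf ∧
      Vf (f z (κ z)) ≤ Vf z - l z (κ z))
    (V : (Fin nx → ℝ) → ℝ)
    (hV : ∀ z : Fin nx → ℝ,
      IsGLB {r : ℝ | ∃ μ : Fin N → (Fin nu → ℝ),
        (∀ k, μ k ∈ Uset) ∧ cost f l Vf z μ = r} (V z))
    (x : Fin nx → ℝ) (hx : x ∈ Xf) :
    V x ≤ Vf x :=
  stmt6_general f l Vf Uset Xf κ hκ V hV x hx
end

section
/- Consider the finite-horizon optimal control setup with dynamics f, stage cost l, terminal cost V_f, input constraint set 𝒰, horizon N, predicted states ξ_k(x,μ), and running cost h(x,μ) as defined below. Let d > 0, α > 0, and let X_α ⊆ ℝ^{n_x}. Assume l(z,u) ≥ 0 and V_f(z) ≥ 0 for all z ∈ ℝ^{n_x}, u ∈ ℝ^{n_u}, and assume l(z,u) ≥ d for all z ∉ X_α and all u ∈ 𝒰. Then for every x ∈ ℝ^{n_x} and every μ ∈ 𝒰^N with h(x,μ) ≤ N·d + α, either there exists k ∈ {0,…,N−1} with ξ_k(x,μ) ∈ X_α, or V_f(ξ_N(x,μ))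 ≤ α. -/
/-- **Pigeonhole step in the region-of-attraction analysis (Theorem 2).**
If `l ≥ 0`, `V_f ≥ 0`, and `l(z,u) ≥ d` whenever `z ∉ X_α` and `u ∈ 𝒰`, then for
any `x` and `μ ∈ 𝒰^N` with `h(x,μ) ≤ N·d + α`, either some predicted state
`ξ_k(x,μ)`, `k ∈ {0,…,N-1}`, lies in `X_α`, or `V_f(ξ_N(x,μ)) ≤ α`. -/
theorem stmt7 {nx nu N : ℕ} (hN : 0 < N)
    (f : (Fin nx → ℝ) → (Fin nu → ℝ) → (Fin nx → ℝ))
    (l : (Fin nx → ℝ) → (Fin nu → ℝ) → ℝ) (Vf : (Fin nx → ℝ) → ℝ)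
    (Uset : Set (Fin nu → ℝ)) (hUne : Uset.Nonempty) (hUcl : IsClosed Uset)
    (hUcv : Convex ℝ Uset)
    (Xα : Set (Fin nx → ℝ)) (d α : ℝ) (hd : 0 < d) (hα : 0 < α)
    (hl0 : ∀ z u, 0 ≤ l z u) (hVf0 : ∀ z, 0 ≤ Vf z)
    (hld : ∀ z, z ∉ Xα → ∀ u ∈ Uset, d ≤ l z u)
    (x : Fin nx → ℝ) (μ : Fin N → (Fin nu → ℝ)) (hμU : ∀ k, μ k ∈ Uset)
    (hcost : cost f l Vf x μ ≤ N * d + α) :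
    (∃ k : Fin N, xi f x μ k.val ∈ Xα) ∨ Vf (xi f x μ N) ≤ α := by
  by_contra h
  push_neg at h
  obtain ⟨hk, hV⟩ := h
  have hsum : (N : ℝ) * d ≤ ∑ k : Fin N, l (xi f x μ k.val) (μ k) := by
    calc (N : ℝ) * d = ∑ _k : Fin N, d := by simp [mul_comm]
    _ ≤ _ := Finset.sum_le_sum fun k _ => hld _ (hk k) _ (hμU k)
  have : (N : ℝ) * d + α < cost f l Vf x μ := by
    unfold cost
    have := hV
    linarith
  linarith
end

section
/- Let f : ℝ^{n_x} × ℝ^{n_u} → ℝ^{n_x}, 𝒰 ⊆ ℝ^{n_u}, Γ ⊆ ℝ^{n_x}, h : ℝ^{n_x} × (ℝ^{n_u})^N → ℝ, μ* : ℝ^{n_x} → (ℝ^{n_u})^N, V : ℝ^{n_x} → ℝ with V(z) = h(z, μ*(z)) for z ∈ Γ, stage cost l : ℝ^{n_x} × ℝ^{n_u} → ℝ, and u*(x) := μ*_0(x) (the first component of μ*(x)). Fix x ∈ Γ and u ∈ 𝒰 with f(x,u) ∈ Γ and f(x,u*(x)) ∈ Γ. Assume: (i) the optimal decrease V(f(x,u*(x)))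 ≤ V(x) − l(x,u*(x)); (ii) h is L_2-Lipschitz on Γ × (ℝ^{n_u})^N with respect to the Euclidean product norm; (iii) ‖μ*(f(x,u)) − μ*(f(x,u*(x)))‖ ≤ L_3 ‖f(x,u) − f(x,u*(x))‖; (iv) ‖f(x,u) − f(x,u*(x))‖ ≤ L_4 ‖u − u*(x)‖; (v) l(x,·) is L_1-Lipschitz on 𝒰. Then, with σ := L_2 L_4 (1 + L_3) + L_1, it holds that V(f(x,u)) ≤ V(x) − l(x,u) + σ ‖u − u*(x)‖. -/
/-- **Proposition 1 of the paper.**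
With `V(z) = h(z, μ*(z))` on `Γ`, the optimal decrease (i), `h` `L₂`-Lipschitz on
`Γ × (ℝ^{nu})^N` (ii), the optimizer sensitivity bound (iii), the dynamics bound
(iv), and `l(x,·)` `L₁`-Lipschitz on `𝒰` (v), it holds with
`σ = L₂L₄(1 + L₃) + L₁` that `V(f(x,u)) ≤ V(x) - l(x,u) + σ‖u - u*(x)‖`,
where `u*(x) = (μ*(x))_0`. -/
theorem stmt11 {nx nu N : ℕ} (hN : 0 < N)
    (f : EuclideanSpace ℝ (Fin nx) → EuclideanSpace ℝ (Fin nu) → EuclideanSpace ℝ (Fin nx))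
    (Uset : Set (EuclideanSpace ℝ (Fin nu)))
    (Γ : Set (EuclideanSpace ℝ (Fin nx)))
    (h : EuclideanSpace ℝ (Fin nx) →
      PiLp 2 (fun _ : Fin N => EuclideanSpace ℝ (Fin nu)) → ℝ)
    (μopt : EuclideanSpace ℝ (Fin nx) →
      PiLp 2 (fun _ : Fin N => EuclideanSpace ℝ (Fin nu)))
    (V : EuclideanSpace ℝ (Fin nx) → ℝ)
    (l : EuclideanSpace ℝ (Fin nx) → EuclideanSpace ℝ (Fin nu) → ℝ)
    (hVdef : ∀ z ∈ Γ, V z = h z (μopt z))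
    (x : EuclideanSpace ℝ (Fin nx)) (hxΓ : x ∈ Γ)
    (hμoptU : ∀ k : Fin N, μopt x k ∈ Uset)
    (u : EuclideanSpace ℝ (Fin nu)) (huU : u ∈ Uset)
    (hfu : f x u ∈ Γ) (hfus : f x (μopt x ⟨0, hN⟩) ∈ Γ)
    (L₁ L₂ L₃ L₄ : ℝ) (hL₁ : 0 < L₁) (hL₂ : 0 < L₂) (hL₃ : 0 < L₃) (hL₄ : 0 < L₄)
    (hdec : V (f x (μopt x ⟨0, hN⟩)) ≤ V x - l x (μopt x ⟨0, hN⟩))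
    (hhLip : ∀ z ∈ Γ, ∀ z' ∈ Γ,
      ∀ ν ν' : PiLp 2 (fun _ : Fin N => EuclideanSpace ℝ (Fin nu)),
        |h z ν - h z' ν'| ≤ L₂ * Real.sqrt (‖z - z'‖ ^ 2 + ‖ν - ν'‖ ^ 2))
    (hμLip : ‖μopt (f x u) - μopt (f x (μopt x ⟨0, hN⟩))‖ ≤
      L₃ * ‖f x u - f x (μopt x ⟨0, hN⟩)‖)
    (hfLip : ‖f x u - f x (μopt x ⟨0, hN⟩)‖ ≤ L₄ * ‖u - μopt x ⟨0, hN⟩‖)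
    (hlLip : ∀ u₁ ∈ Uset, ∀ u₂ ∈ Uset, |l x u₁ - l x u₂| ≤ L₁ * ‖u₁ - u₂‖) :
    V (f x u) ≤ V x - l x u +
      (L₂ * L₄ * (1 + L₃) + L₁) * ‖u - μopt x ⟨0, hN⟩‖ := by

  set us := μopt x ⟨0, hN⟩ with hus
  have hnn : (0:ℝ) ≤ ‖u - us‖ := norm_nonneg _
  -- bound V(f x u) - V(f x us)
  have h1 : V (f x u) - V (f x us) ≤ L₂ * L₄ * (1 + L₃) * ‖u - us‖ := by
    rw [hVdef _ hfu, hVdef _ hfus]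
    have hb := hhLip _ hfu _ hfus (μopt (f x u)) (μopt (f x us))
    have h2 : V (f x u) - V (f x us) ≤ |h (f x u) (μopt (f x u)) - h (f x us) (μopt (f x us))| := by
      rw [hVdef _ hfu, hVdef _ hfus]; exact le_abs_self _
    refine le_trans (le_abs_self _) (le_trans hb ?_)
    set a := ‖f x u - f x us‖ with ha
    set b := ‖μopt (f x u) - μopt (f x us)‖ with hb2
    have hann : (0:ℝ) ≤ a := norm_nonneg _
    have hbnn : (0:ℝ) ≤ b := norm_nonneg _
    have hsq : Real.sqrt (a ^ 2 + b ^ 2) ≤ a + b := by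
      have : a ^ 2 + b ^ 2 ≤ (a + b) ^ 2 := by nlinarith
      calc Real.sqrt (a ^ 2 + b ^ 2) ≤ Real.sqrt ((a + b) ^ 2) := Real.sqrt_le_sqrt this
        _ = a + b := by rw [Real.sqrt_sq (by positivity)]
    have hab : a + b ≤ (1 + L₃) * a := by
      have := hμLip; nlinarith
    calc L₂ * Real.sqrt (a ^ 2 + b ^ 2) ≤ L₂ * ((1 + L₃) * a) := by
          exact mul_le_mul_of_nonneg_left (le_trans hsq hab) hL₂.le
      _ ≤ L₂ * ((1 + L₃) * (L₄ * ‖u - us‖)) := by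
          have h3 : (0:ℝ) ≤ 1 + L₃ := by linarith
          exact mul_le_mul_of_nonneg_left (mul_le_mul_of_nonneg_left hfLip h3) hL₂.le
      _ = L₂ * L₄ * (1 + L₃) * ‖u - us‖ := by ring
  -- bound l(x,us) ≥ l(x,u) - L₁‖u-us‖
  have h4 : l x u - l x us ≤ L₁ * ‖u - us‖ := by
    have := hlLip u huU us (hμoptU ⟨0, hN⟩)
    exact le_trans (le_abs_self _) this
  linarith
end

section
/- Let f : ℝ^{n_x} × ℝ^{n_u} → ℝ^{n_x}, 𝒰 ⊆ ℝ^{n_u} nonempty closed convex, Γ ⊆ ℝ^{n_x}, h : ℝ^{n_x} × (ℝ^{n_u})^N → ℝ, μ* : ℝ^{n_x} → (ℝ^{n_u})^N, V : ℝ^{n_x} → ℝ with V(z) = h(z, μ*(z)) for z ∈ Γ, stage cost l, and u*(x) := μ*_0(x). Fix x ∈ Γ, a current input sequence μ ∈ 𝒰^N with first component u := μ_0, a step size γ > 0, constants ε ∈ [0,1), L_1, L_2, L_3, L_4 > 0, and set σ := L_2 L_4 (1 + L_3) + L_1. Assume f(x,u) ∈ Γ, f(x,u*(x)) ∈ Γ,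 and: (i) V(f(x,u*(x))) ≤ V(x) − l(x,u*(x)); (ii) h is L_2-Lipschitz on Γ × (ℝ^{n_u})^N; (iii) ‖μ*(f(x,u)) − μ*(f(x,u*(x)))‖ ≤ L_3 ‖f(x,u) − f(x,u*(x))‖; (iv) ‖f(x,u) − f(x,u*(x))‖ ≤ L_4 ‖u − u*(x)‖; (v) l(x,·) is L_1-Lipschitz on 𝒰; (vi) (1 − ε²)‖μ − μ*(x)‖² ≤ ‖μ − Π_{𝒰^N}(μ − γ∇_μ h(x,μ))‖²; (vii) the stopping criterion ‖μ − Π_{𝒰^N}(μ − γ∇_μ h(x,μ))‖ < (√(1 − ε²)/σ) · l(x,u) holds. Then V(f(x,u)) < V(x). -/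
set_option maxHeartbeats 1000000 in
/-- **Theorem 3 of the paper: value-function decrease under the stopping criterion.**
With `V(z) = h(z, μ*(z))` on `Γ`, the optimal decrease (i), `h` `L₂`-Lipschitz on
`Γ × (ℝ^{nu})^N` (ii), the optimizer sensitivity bound (iii), the dynamics
bound (iv), `l(x,·)` `L₁`-Lipschitz on `𝒰` (v), the gradient-mapping lower
bound (vi), and the stopping criterion (vii) with `σ = L₂L₄(1+L₃) + L₁`,
the suboptimal real-time input `u = μ₀` yields a strict decrease
`V(f(x,u)) < V(x)`.  Here `proj` is the metric projection onto `𝒰^N` and the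
gradient is taken in the input-sequence space `PiLp 2`. -/
theorem stmt13 {nx nu N : ℕ} (hN : 0 < N)
    (f : EuclideanSpace ℝ (Fin nx) → EuclideanSpace ℝ (Fin nu) → EuclideanSpace ℝ (Fin nx))
    (Uset : Set (EuclideanSpace ℝ (Fin nu)))
    (hUne : Uset.Nonempty) (hUcl : IsClosed Uset) (hUcv : Convex ℝ Uset)
    (Γ : Set (EuclideanSpace ℝ (Fin nx)))
    (h : EuclideanSpace ℝ (Fin nx) →
      PiLp 2 (fun _ : Fin N => EuclideanSpace ℝ (Fin nu)) → ℝ)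
    (μopt : EuclideanSpace ℝ (Fin nx) →
      PiLp 2 (fun _ : Fin N => EuclideanSpace ℝ (Fin nu)))
    (V : EuclideanSpace ℝ (Fin nx) → ℝ)
    (l : EuclideanSpace ℝ (Fin nx) → EuclideanSpace ℝ (Fin nu) → ℝ)
    (hVdef : ∀ z ∈ Γ, V z = h z (μopt z))
    (proj : PiLp 2 (fun _ : Fin N => EuclideanSpace ℝ (Fin nu)) →
      PiLp 2 (fun _ : Fin N => EuclideanSpace ℝ (Fin nu)))
    (hproj : ∀ y, (∀ k : Fin N, proj y k ∈ Uset) ∧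
      ∀ z : PiLp 2 (fun _ : Fin N => EuclideanSpace ℝ (Fin nu)),
        (∀ k : Fin N, z k ∈ Uset) → ‖y - proj y‖ ≤ ‖y - z‖)
    (x : EuclideanSpace ℝ (Fin nx)) (hxΓ : x ∈ Γ)
    (μ : PiLp 2 (fun _ : Fin N => EuclideanSpace ℝ (Fin nu)))
    (hμU : ∀ k : Fin N, μ k ∈ Uset)
    (hμoptU : ∀ k : Fin N, μopt x k ∈ Uset)
    (γ : ℝ) (hγ : 0 < γ)
    (ε : ℝ) (hε0 : 0 ≤ ε) (hε1 : ε < 1)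
    (L₁ L₂ L₃ L₄ : ℝ) (hL₁ : 0 < L₁) (hL₂ : 0 < L₂) (hL₃ : 0 < L₃) (hL₄ : 0 < L₄)
    (hfu : f x (μ ⟨0, hN⟩) ∈ Γ) (hfus : f x (μopt x ⟨0, hN⟩) ∈ Γ)
    (hdec : V (f x (μopt x ⟨0, hN⟩)) ≤ V x - l x (μopt x ⟨0, hN⟩))
    (hhLip : ∀ z ∈ Γ, ∀ z' ∈ Γ,
      ∀ ν ν' : PiLp 2 (fun _ : Fin N => EuclideanSpace ℝ (Fin nu)),
        |h z ν - h z' ν'| ≤ L₂ * Real.sqrt (‖z - z'‖ ^ 2 + ‖ν - ν'‖ ^ 2))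
    (hμLip : ‖μopt (f x (μ ⟨0, hN⟩)) - μopt (f x (μopt x ⟨0, hN⟩))‖ ≤
      L₃ * ‖f x (μ ⟨0, hN⟩) - f x (μopt x ⟨0, hN⟩)‖)
    (hfLip : ‖f x (μ ⟨0, hN⟩) - f x (μopt x ⟨0, hN⟩)‖ ≤
      L₄ * ‖μ ⟨0, hN⟩ - μopt x ⟨0, hN⟩‖)
    (hlLip : ∀ u₁ ∈ Uset, ∀ u₂ ∈ Uset, |l x u₁ - l x u₂| ≤ L₁ * ‖u₁ - u₂‖)
    (hlow : (1 - ε ^ 2) * ‖μ - μopt x‖ ^ 2 ≤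
      ‖μ - proj (μ - γ • gradient (h x) μ)‖ ^ 2)
    (hstop : ‖μ - proj (μ - γ • gradient (h x) μ)‖ <
      Real.sqrt (1 - ε ^ 2) / (L₂ * L₄ * (1 + L₃) + L₁) * l x (μ ⟨0, hN⟩)) :
    V (f x (μ ⟨0, hN⟩)) < V x := by
  set u : EuclideanSpace ℝ (Fin nu) := μ ⟨0, hN⟩ with hu
  set us : EuclideanSpace ℝ (Fin nu) := μopt x ⟨0, hN⟩ with hus
  set σ : ℝ := L₂ * L₄ * (1 + L₃) + L₁ with hσ
  have hσpos : 0 < σ := by positivity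
  have hεsq : 0 < 1 - ε ^ 2 := by nlinarith
  have hsq : 0 < Real.sqrt (1 - ε ^ 2) := Real.sqrt_pos.mpr hεsq
  -- bound ‖μ - μopt x‖ < l x u / σ
  have hlb : Real.sqrt (1 - ε ^ 2) * ‖μ - μopt x‖ ≤
      ‖μ - proj (μ - γ • gradient (h x) μ)‖ := by
    have h1 : Real.sqrt ((1 - ε ^ 2) * ‖μ - μopt x‖ ^ 2) ≤
        Real.sqrt (‖μ - proj (μ - γ • gradient (h x) μ)‖ ^ 2) :=
      Real.sqrt_le_sqrt hlow
    rwa [Real.sqrt_mul hεsq.le, Real.sqrt_sq (norm_nonneg _),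
      Real.sqrt_sq (norm_nonneg _)] at h1
  have hkey : σ * ‖μ - μopt x‖ < l x u := by
    have h2 : Real.sqrt (1 - ε ^ 2) * ‖μ - μopt x‖ <
        Real.sqrt (1 - ε ^ 2) / σ * l x u := lt_of_le_of_lt hlb hstop
    rw [div_mul_eq_mul_div, lt_div_iff₀ hσpos] at h2
    nlinarith [hsq, norm_nonneg (μ - μopt x)]
  -- component bound
  have hcomp : ‖u - us‖ ≤ ‖μ - μopt x‖ := by
    have h3 : ‖u - us‖ ^ 2 ≤ ‖μ - μopt x‖ ^ 2 := by
      have he : u - us = (μ - μopt x) ⟨0, hN⟩ := rfl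
      calc ‖u - us‖ ^ 2 = ‖(μ - μopt x) ⟨0, hN⟩‖ ^ 2 := by rw [he]
        _ ≤ ∑ i, ‖(μ - μopt x) i‖ ^ 2 :=
          Finset.single_le_sum (f := fun i => ‖(μ - μopt x) i‖ ^ 2)
            (fun i _ => by positivity) (Finset.mem_univ _)
        _ = ‖μ - μopt x‖ ^ 2 := (PiLp.norm_sq_eq_of_L2 _ (μ - μopt x)).symm
    have := Real.sqrt_le_sqrt h3
    rwa [Real.sqrt_sq (norm_nonneg _), Real.sqrt_sq (norm_nonneg _)] at this
  set D : ℝ := ‖f x u - f x us‖ with hD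
  -- value function Lipschitz bound
  have hV1 : V (f x u) - V (f x us) ≤ L₂ * (1 + L₃) * D := by
    rw [hVdef _ hfu, hVdef _ hfus]
    have h4 := hhLip _ hfu _ hfus (μopt (f x u)) (μopt (f x us))
    have h5 : Real.sqrt (‖f x u - f x us‖ ^ 2 + ‖μopt (f x u) - μopt (f x us)‖ ^ 2)
        ≤ D + L₃ * D := by
      have hnn : (0:ℝ) ≤ D + L₃ * D := by positivity
      rw [show (D + L₃ * D) = Real.sqrt ((D + L₃ * D) ^ 2) from
        (Real.sqrt_sq hnn).symm]
      apply Real.sqrt_le_sqrt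
      have h6 : ‖μopt (f x u) - μopt (f x us)‖ ≤ L₃ * D := hμLip
      nlinarith [norm_nonneg (μopt (f x u) - μopt (f x us)), norm_nonneg (f x u - f x us)]
    have h7 : L₂ * Real.sqrt (‖f x u - f x us‖ ^ 2 +
        ‖μopt (f x u) - μopt (f x us)‖ ^ 2) ≤ L₂ * (1 + L₃) * D :=
      calc L₂ * Real.sqrt (‖f x u - f x us‖ ^ 2 +
            ‖μopt (f x u) - μopt (f x us)‖ ^ 2) ≤ L₂ * (D + L₃ * D) :=
          mul_le_mul_of_nonneg_left h5 hL₂.le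
        _ = L₂ * (1 + L₃) * D := by ring
    have h8 := (abs_le.mp h4).2
    linarith
  have hD4 : D ≤ L₄ * ‖u - us‖ := hfLip
  have hl : l x us ≥ l x u - L₁ * ‖u - us‖ := by
    have := (abs_le.mp (hlLip u (hμU _) us (hμoptU _))).2
    linarith
  -- combine
  have hchain : V (f x u) ≤ V x - l x u + σ * ‖u - us‖ := by
    have : V (f x u) ≤ V (f x us) + L₂ * (1 + L₃) * D := by linarith
    have h7 : L₂ * (1 + L₃) * D ≤ L₂ * L₄ * (1 + L₃) * ‖u - us‖ := by
      have hc : (0:ℝ) ≤ L₂ * (1 + L₃) := by positivity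
      calc L₂ * (1 + L₃) * D ≤ L₂ * (1 + L₃) * (L₄ * ‖u - us‖) :=
            mul_le_mul_of_nonneg_left hD4 hc
        _ = L₂ * L₄ * (1 + L₃) * ‖u - us‖ := by ring
    calc V (f x u) ≤ V (f x us) + L₂ * (1 + L₃) * D := this
      _ ≤ V x - l x us + L₂ * L₄ * (1 + L₃) * ‖u - us‖ := by linarith
      _ ≤ V x - l x u + σ * ‖u - us‖ := by rw [hσ]; linarith
  have h8 : σ * ‖u - us‖ ≤ σ * ‖μ - μopt x‖ :=
    mul_le_mul_of_nonneg_left hcomp hσpos.le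
  linarith
end
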